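/- arXiv:1906.02176 — 3 statements merged into one kernel-verified Lean document; each statement's English description precedes it below -/
import Mathlib

section
/- Let c < d, ε > 0, and σ : [c,d] → ℝ continuous. Let f, g : [c,d] × [−1,1] → ℝ be continuous, continuously differentiable in x with jointly continuous x-derivatives, and suppose that for all (x,v) ∈ [c,d] × [−1,1]: v ∂ₓf(x,v) = (σ(x)/ε)(Lf)(x,v) (forward transport) and −v ∂ₓg(x,v) = (σ(x)/ε)(Lg)(x,v) (adjoint transport), where (Lw)(x,v) = (1/2)∫_{−1}^{1} w(x,v′) dv′ − w(x,v). Then the boundary flux pairing is conserved: ∫_{−1}^{1} v f(d,v) g(d,v) dv = ∫_{−1}^{1} v f(c,v) g(c,v) dv. -/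
/-!
Multiply the forward equation by `g`, the adjoint one by `f` and add: the flux density
`v f g` has `x`-derivative `(σ/ε) ((L f) g - f (L g))`, whose velocity integral vanishes
because `L` is symmetric on `L²(-1, 1)`. Integrating over the slab and swapping the order of
integration, the difference of the boundary fluxes is therefore zero.
-/

open Set MeasureTheory
open scoped Interval

section

variable {E : Type*} [NormedAddCommGroup E] [NormedSpace ℝ E]

theorem intervalIntegral.integral_eq_sub_of_hasDerivWithinAt_Icc [CompleteSpace E]
    {f f' : ℝ → E} {a b : ℝ}
    (hab : a ≤ b) (hf : ∀ x ∈ Icc a b, HasDerivWithinAt f (f' x) (Icc a b) x)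
    (hf' : IntervalIntegrable f' volume a b) : ∫ x in a..b, f' x = f b - f a :=
  intervalIntegral.integral_eq_sub_of_hasDerivAt_of_le hab
    (fun x hx ↦ (hf x hx).continuousWithinAt)
    (fun x hx ↦ (hf x (mem_Icc_of_Ioo hx)).hasDerivAt (Icc_mem_nhds hx.1 hx.2)) hf'

theorem intervalIntegral_intervalIntegral_swap_of_continuousOn {F : ℝ → ℝ → E}
    {a b c d : ℝ}
    (hF : ContinuousOn F.uncurry ([[a, b]] ×ˢ [[c, d]])) :
    ∫ x in a..b, ∫ y in c..d, F x y = ∫ y in c..d, ∫ x in a..b, F x y :=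
  intervalIntegral_intervalIntegral_swap <|
    (hF.integrableOn_compact (isCompact_uIcc.prod isCompact_uIcc)).mono_set
      (prod_mono uIoc_subset_uIcc uIoc_subset_uIcc)

theorem intervalIntegral_sub_eq_integral_integral_of_hasDerivWithinAt [CompleteSpace E]
    {Φ φ : ℝ → ℝ → E} {a b c d : ℝ} (hcd : c ≤ d) (hab : a ≤ b)
    (hΦ : ∀ x ∈ Icc c d, ∀ v ∈ Icc a b, HasDerivWithinAt (Φ · v) (φ x v) (Icc c d) x)
    (hφ : ContinuousOn φ.uncurry (Icc c d ×ˢ Icc a b)) :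
    ∫ v in a..b, (Φ d v - Φ c v) = ∫ x in c..d, ∫ v in a..b, φ x v := by
  rw [intervalIntegral_intervalIntegral_swap_of_continuousOn
    (by rwa [uIcc_of_le hcd, uIcc_of_le hab])]
  refine intervalIntegral.integral_congr fun v hv ↦ ?_
  rw [uIcc_of_le hab] at hv
  exact (intervalIntegral.integral_eq_sub_of_hasDerivWithinAt_Icc hcd (fun x hx ↦ hΦ x hx v hv)
    ((hφ.uncurry_right v hv).intervalIntegrable_of_Icc hcd)).symm

end

noncomputable def scattering (w : ℝ → ℝ) (v : ℝ) : ℝ :=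
  (1 / 2) * (∫ v' in (-1 : ℝ)..1, w v') - w v

theorem integral_scattering_mul_sub_mul_scattering {w₁ w₂ : ℝ → ℝ}
    (h₁ : IntervalIntegrable w₁ volume (-1) 1) (h₂ : IntervalIntegrable w₂ volume (-1) 1) :
    ∫ v in (-1 : ℝ)..1, (scattering w₁ v * w₂ v - w₁ v * scattering w₂ v) = 0 := by
  set I₁ := ∫ v in (-1 : ℝ)..1, w₁ v
  set I₂ := ∫ v in (-1 : ℝ)..1, w₂ v
  have hpointwise : ∀ v, scattering w₁ v * w₂ v - w₁ v * scattering w₂ v =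
      (1 / 2 * I₁) * w₂ v - (1 / 2 * I₂) * w₁ v := fun v ↦ by
    simp only [scattering]
    ring
  simp only [hpointwise]
  rw [intervalIntegral.integral_sub (h₂.const_mul _) (h₁.const_mul _),
    intervalIntegral.integral_const_mul, intervalIntegral.integral_const_mul]
  ring

theorem rte_flux_conservation_general (c d ε : ℝ) (hcd : c < d)
    (σ : ℝ → ℝ)
    (f g fd gd : ℝ → ℝ → ℝ)
    (hf_cont : ContinuousOn (fun q : ℝ × ℝ => f q.1 q.2)
      (Set.Icc c d ×ˢ Set.Icc (-1 : ℝ) 1))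
    (hg_cont : ContinuousOn (fun q : ℝ × ℝ => g q.1 q.2)
      (Set.Icc c d ×ˢ Set.Icc (-1 : ℝ) 1))
    (hfd : ∀ x ∈ Set.Icc c d, ∀ v ∈ Set.Icc (-1 : ℝ) 1,
      HasDerivWithinAt (fun x' => f x' v) (fd x v) (Set.Icc c d) x)
    (hgd : ∀ x ∈ Set.Icc c d, ∀ v ∈ Set.Icc (-1 : ℝ) 1,
      HasDerivWithinAt (fun x' => g x' v) (gd x v) (Set.Icc c d) x)
    (hfd_cont : ContinuousOn (fun q : ℝ × ℝ => fd q.1 q.2)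
      (Set.Icc c d ×ˢ Set.Icc (-1 : ℝ) 1))
    (hgd_cont : ContinuousOn (fun q : ℝ × ℝ => gd q.1 q.2)
      (Set.Icc c d ×ˢ Set.Icc (-1 : ℝ) 1))
    (hpde_f : ∀ x ∈ Set.Icc c d, ∀ v ∈ Set.Icc (-1 : ℝ) 1,
      v * fd x v = (σ x / ε) * (((1 / 2) * ∫ v' in (-1 : ℝ)..1, f x v') - f x v))
    (hpde_g : ∀ x ∈ Set.Icc c d, ∀ v ∈ Set.Icc (-1 : ℝ) 1,
      -v * gd x v = (σ x / ε) * (((1 / 2) * ∫ v' in (-1 : ℝ)..1, g x v') - g x v)) :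
    ∫ v in (-1 : ℝ)..1, v * f d v * g d v = ∫ v in (-1 : ℝ)..1, v * f c v * g c v := by
  have hv : (-1 : ℝ) ≤ 1 := by norm_num
  have hslice {w : ℝ → ℝ → ℝ} (hw : ContinuousOn w.uncurry (Icc c d ×ˢ Icc (-1) 1))
      {x : ℝ} (hx : x ∈ Icc c d) : IntervalIntegrable (w x) volume (-1) 1 :=
    (hw.uncurry_left x hx).intervalIntegrable_of_Icc hv
  have hbalance : ∀ x ∈ Icc c d,
      ∫ v in (-1 : ℝ)..1, (v * fd x v * g x v + v * f x v * gd x v) = 0 := fun x hx ↦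
    calc ∫ v in (-1 : ℝ)..1, (v * fd x v * g x v + v * f x v * gd x v)
        = ∫ v in (-1 : ℝ)..1,
            σ x / ε * (scattering (f x) v * g x v - f x v * scattering (g x) v) := by
          refine intervalIntegral.integral_congr fun v hv' ↦ ?_
          rw [uIcc_of_le hv] at hv'
          simp only [scattering]
          linear_combination g x v * hpde_f x hx v hv' - f x v * hpde_g x hx v hv'
      _ = 0 := by
          rw [intervalIntegral.integral_const_mul, integral_scattering_mul_sub_mul_scattering
            (hslice hf_cont hx) (hslice hg_cont hx), mul_zero]
  have hflux_cont : ContinuousOn (fun x v ↦ v * f x v * g x v).uncurry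
      (Icc c d ×ˢ Icc (-1) 1) :=
    (continuous_snd.continuousOn.mul hf_cont).mul hg_cont
  have hgreen := intervalIntegral_sub_eq_integral_integral_of_hasDerivWithinAt
    (Φ := fun x v ↦ v * f x v * g x v) hcd.le hv
    (fun x hx v hv' ↦ ((hfd x hx v hv').const_mul v).mul (hgd x hx v hv'))
    (((continuous_snd.continuousOn.mul hfd_cont).mul hg_cont).add
      ((continuous_snd.continuousOn.mul hf_cont).mul hgd_cont))
  rw [intervalIntegral.integral_congr (fun x hx ↦ hbalance x (by rwa [uIcc_of_le hcd.le] at hx)),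
    intervalIntegral.integral_zero,
    intervalIntegral.integral_sub (hslice hflux_cont (right_mem_Icc.2 hcd.le))
      (hslice hflux_cont (left_mem_Icc.2 hcd.le))] at hgreen
  exact sub_eq_zero.mp hgreen

/-- Flux conservation (Green's identity) for the 1D radiative transfer equation on a slab
`[c,d] × [−1,1]`: if `f` solves the forward transport equation
`v ∂ₓf = (σ(x)/ε) L f` and `g` the adjoint transport equation `−v ∂ₓg = (σ(x)/ε) L g`,
with `(L w)(x,v) = (1/2)∫_{−1}^{1} w(x,v′) dv′ − w(x,v)`, then the boundary flux pairing
is conserved: `∫_{−1}^{1} v f(d,v) g(d,v) dv = ∫_{−1}^{1} v f(c,v) g(c,v) dv`. -/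
theorem rte_flux_conservation (c d ε : ℝ) (hcd : c < d) (hε : 0 < ε)
    (σ : ℝ → ℝ) (hσ : ContinuousOn σ (Set.Icc c d))
    (f g fd gd : ℝ → ℝ → ℝ)
    (hf_cont : ContinuousOn (fun q : ℝ × ℝ => f q.1 q.2)
      (Set.Icc c d ×ˢ Set.Icc (-1 : ℝ) 1))
    (hg_cont : ContinuousOn (fun q : ℝ × ℝ => g q.1 q.2)
      (Set.Icc c d ×ˢ Set.Icc (-1 : ℝ) 1))
    (hfd : ∀ x ∈ Set.Icc c d, ∀ v ∈ Set.Icc (-1 : ℝ) 1,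
      HasDerivWithinAt (fun x' => f x' v) (fd x v) (Set.Icc c d) x)
    (hgd : ∀ x ∈ Set.Icc c d, ∀ v ∈ Set.Icc (-1 : ℝ) 1,
      HasDerivWithinAt (fun x' => g x' v) (gd x v) (Set.Icc c d) x)
    (hfd_cont : ContinuousOn (fun q : ℝ × ℝ => fd q.1 q.2)
      (Set.Icc c d ×ˢ Set.Icc (-1 : ℝ) 1))
    (hgd_cont : ContinuousOn (fun q : ℝ × ℝ => gd q.1 q.2)
      (Set.Icc c d ×ˢ Set.Icc (-1 : ℝ) 1))
    (hpde_f : ∀ x ∈ Set.Icc c d, ∀ v ∈ Set.Icc (-1 : ℝ) 1,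
      v * fd x v = (σ x / ε) * (((1 / 2) * ∫ v' in (-1 : ℝ)..1, f x v') - f x v))
    (hpde_g : ∀ x ∈ Set.Icc c d, ∀ v ∈ Set.Icc (-1 : ℝ) 1,
      -v * gd x v = (σ x / ε) * (((1 / 2) * ∫ v' in (-1 : ℝ)..1, g x v') - g x v)) :
    ∫ v in (-1 : ℝ)..1, v * f d v * g d v = ∫ v in (-1 : ℝ)..1, v * f c v * g c v :=
  rte_flux_conservation_general c d ε hcd σ f g fd gd hf_cont hg_cont hfd hgd hfd_cont hgd_cont
    hpde_f hpde_g
end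

section
/- (1D trace inequality.) Let u : [0,1] × [−1,1] → ℝ be continuous and continuously differentiable in x with jointly continuous x-derivative. Then the weighted boundary trace at x = 0 is controlled by the H¹₂-type norm: ∫_{−1}^{1} |v| u(0,v)² dv ≤ ∫_0^1 ∫_{−1}^{1} [ (1 + |v|) u(x,v)² + (v ∂ₓu(x,v))² ] dv dx, and the same bound holds for the trace at x = 1. -/
/-!
Fix a velocity `v` and put `f = u(·, v)`. By the fundamental theorem of calculus applied to `f²`,
`f(a)² ≤ f(x)² + ∫₀¹ |2 f f'|` for every `x ∈ [0,1]`, and by AM-GM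
`|v| |2 f f'| ≤ f² + (v f')²`. Averaging `|v| f(a)² ≤ |v| f(x)² + ∫₀¹ f² + (v f')²` over
`x ∈ [0,1]` bounds the trace at `a` for this one velocity; integrating in `v` and exchanging the
order of integration (Fubini, for the continuous integrand on the compact slab) gives the claim.
-/

open MeasureTheory Set Function

theorem abs_sub_le_integral_abs_deriv {g g' : ℝ → ℝ} {a b x y : ℝ}
    (hg : ∀ t ∈ Icc a b, HasDerivWithinAt g (g' t) (Icc a b) t)
    (hg' : IntervalIntegrable g' volume a b) (hx : x ∈ Icc a b) (hy : y ∈ Icc a b) :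
    |g y - g x| ≤ ∫ t in a..b, |g' t| := by
  wlog hxy : x ≤ y generalizing x y
  · rw [abs_sub_comm]
    exact this hy hx (le_of_not_ge hxy)
  have hsub : Icc x y ⊆ Icc a b := Icc_subset_Icc hx.1 hy.2
  have hftc : ∫ t in x..y, g' t = g y - g x :=
    intervalIntegral.integral_eq_sub_of_hasDerivAt_of_le hxy
      (fun t ht => (hg t (hsub ht)).continuousWithinAt.mono hsub)
      (fun t ht => (hg t (hsub (Ioo_subset_Icc_self ht))).hasDerivAt
        (Icc_mem_nhds (hx.1.trans_lt ht.1) (ht.2.trans_le hy.2)))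
      (hg'.mono_set (by rwa [uIcc_of_le hxy, uIcc_of_le (hx.1.trans hx.2)]))
  calc |g y - g x| ≤ ∫ t in x..y, |g' t| :=
      hftc ▸ intervalIntegral.abs_integral_le_integral_abs hxy
    _ ≤ ∫ t in a..b, |g' t| :=
      intervalIntegral.integral_mono_interval hx.1 hxy hy.2
        (Filter.Eventually.of_forall fun _ => abs_nonneg _) hg'.abs

theorem abs_mul_sq_le_integral {f f' : ℝ → ℝ} (c : ℝ) {y : ℝ}
    (hf : ∀ x ∈ Icc (0 : ℝ) 1, HasDerivWithinAt f (f' x) (Icc 0 1) x)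
    (hf' : ContinuousOn f' (Icc 0 1)) (hy : y ∈ Icc (0 : ℝ) 1) :
    |c| * f y ^ 2 ≤ ∫ x in (0 : ℝ)..1, (1 + |c|) * f x ^ 2 + (c * f' x) ^ 2 := by
  have hI : uIcc (0 : ℝ) 1 = Icc 0 1 := uIcc_of_le zero_le_one
  have hfc : ContinuousOn f (Icc 0 1) := fun x hx => (hf x hx).continuousWithinAt
  have hsq (x) (hx : x ∈ Icc (0 : ℝ) 1) :
      HasDerivWithinAt (fun t => f t ^ 2) (2 * f x * f' x) (Icc 0 1) x :=
    ((hf x hx).pow 2).congr_deriv (by ring)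
  have hint {h : ℝ → ℝ} (h_cont : ContinuousOn h (Icc 0 1)) : IntervalIntegrable h volume 0 1 :=
    (hI ▸ h_cont).intervalIntegrable
  set E := ∫ x in (0 : ℝ)..1, f x ^ 2 + (c * f' x) ^ 2
  have hE : IntervalIntegrable (fun x => f x ^ 2 + (c * f' x) ^ 2) volume 0 1 := by
    apply hint; fun_prop
  have hfsq : IntervalIntegrable (fun x => |c| * f x ^ 2) volume 0 1 := by
    apply hint; fun_prop
  have hcross : |c| * ∫ x in (0 : ℝ)..1, |2 * f x * f' x| ≤ E := by
    rw [← intervalIntegral.integral_const_mul]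
    refine intervalIntegral.integral_mono_on zero_le_one ?_ hE fun x _ => ?_
    · apply hint; fun_prop
    · calc |c| * |2 * f x * f' x| = 2 * |f x| * |c * f' x| := by
            simp only [abs_mul, abs_two]; ring
        _ ≤ |f x| ^ 2 + |c * f' x| ^ 2 := two_mul_le_add_sq _ _
        _ = f x ^ 2 + (c * f' x) ^ 2 := by rw [sq_abs, sq_abs]
  have hshift : ∀ x ∈ Icc (0 : ℝ) 1, |c| * f y ^ 2 ≤ |c| * f x ^ 2 + E := by
    intro x hx
    have h := abs_sub_le_integral_abs_deriv hsq (hint (by fun_prop)) hx hy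
    nlinarith [abs_nonneg c, le_abs_self (f y ^ 2 - f x ^ 2)]
  calc |c| * f y ^ 2 = ∫ _ in (0 : ℝ)..1, |c| * f y ^ 2 := by simp
    _ ≤ ∫ x in (0 : ℝ)..1, |c| * f x ^ 2 + E :=
      intervalIntegral.integral_mono_on zero_le_one intervalIntegrable_const
        (hfsq.add intervalIntegrable_const) hshift
    _ = ∫ x in (0 : ℝ)..1, (1 + |c|) * f x ^ 2 + (c * f' x) ^ 2 := by
      rw [intervalIntegral.integral_add hfsq intervalIntegrable_const,
        intervalIntegral.integral_const, sub_zero, one_smul,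
        ← intervalIntegral.integral_add hfsq hE]
      congr 1; ext x; ring

theorem integrable_restrict_Ioc_prod_of_continuousOn {E : Type*} [NormedAddCommGroup E]
    {f : ℝ × ℝ → E} {a b c d : ℝ} (hf : ContinuousOn f (Icc a b ×ˢ Icc c d)) :
    Integrable f ((volume.restrict (Ioc a b)).prod (volume.restrict (Ioc c d))) := by
  rw [Measure.prod_restrict, ← Measure.volume_eq_prod]
  exact (hf.integrableOn_compact (isCompact_Icc.prod isCompact_Icc)).mono_set
    (prod_mono Ioc_subset_Icc_self Ioc_subset_Icc_self)

theorem intervalIntegral_le_integral_integral_of_le {F : ℝ → ℝ} {G : ℝ → ℝ → ℝ} {a b c d : ℝ}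
    (hab : a ≤ b) (hcd : c ≤ d) (hF : IntervalIntegrable F volume c d)
    (hG : ContinuousOn (uncurry G) (Icc a b ×ˢ Icc c d))
    (hle : ∀ y ∈ Icc c d, F y ≤ ∫ x in a..b, G x y) :
    ∫ y in c..d, F y ≤ ∫ x in a..b, ∫ y in c..d, G x y := by
  have hGi := integrable_restrict_Ioc_prod_of_continuousOn hG
  simp only [intervalIntegral.integral_of_le hab, intervalIntegral.integral_of_le hcd] at hle ⊢
  rw [integral_integral_swap hGi]
  exact setIntegral_mono_on ((intervalIntegrable_iff_integrableOn_Ioc_of_le hcd).1 hF)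
    hGi.integral_prod_right measurableSet_Ioc fun y hy => hle y (Ioc_subset_Icc_self hy)

/-- 1D trace inequality (1D form of Theorem 2.8 of Agoshkov): for `u` continuous on
`[0,1] × [−1,1]` and continuously differentiable in `x` with jointly continuous
`x`-derivative `ud`, the weighted boundary traces at `x = 0` and `x = 1` are controlled by
the `H¹₂`-type norm:
`∫_{−1}^{1} |v| u(0,v)² dv ≤ ∫₀¹∫_{−1}^{1} (1+|v|) u(x,v)² + (v ∂ₓu(x,v))² dv dx`. -/
theorem rte_trace_inequality_1d (u ud : ℝ → ℝ → ℝ)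
    (hu_cont : ContinuousOn (fun q : ℝ × ℝ => u q.1 q.2)
      (Set.Icc (0 : ℝ) 1 ×ˢ Set.Icc (-1 : ℝ) 1))
    (hud : ∀ x ∈ Set.Icc (0 : ℝ) 1, ∀ v ∈ Set.Icc (-1 : ℝ) 1,
      HasDerivWithinAt (fun x' => u x' v) (ud x v) (Set.Icc (0 : ℝ) 1) x)
    (hud_cont : ContinuousOn (fun q : ℝ × ℝ => ud q.1 q.2)
      (Set.Icc (0 : ℝ) 1 ×ˢ Set.Icc (-1 : ℝ) 1)) :
    ((∫ v in (-1 : ℝ)..1, |v| * u 0 v ^ 2)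
      ≤ ∫ x in (0 : ℝ)..1, ∫ v in (-1 : ℝ)..1,
          (1 + |v|) * u x v ^ 2 + (v * ud x v) ^ 2) ∧
    ((∫ v in (-1 : ℝ)..1, |v| * u 1 v ^ 2)
      ≤ ∫ x in (0 : ℝ)..1, ∫ v in (-1 : ℝ)..1,
          (1 + |v|) * u x v ^ 2 + (v * ud x v) ^ 2) := by
  have hG : ContinuousOn (uncurry fun x v => (1 + |v|) * u x v ^ 2 + (v * ud x v) ^ 2)
      (Icc (0 : ℝ) 1 ×ˢ Icc (-1 : ℝ) 1) :=
    ((continuous_const.add continuous_snd.abs).continuousOn.mul (hu_cont.pow 2)).add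
      ((continuous_snd.continuousOn.mul hud_cont).pow 2)
  have trace_le (a : ℝ) (ha : a ∈ Icc (0 : ℝ) 1) :
      ∫ v in (-1 : ℝ)..1, |v| * u a v ^ 2
        ≤ ∫ x in (0 : ℝ)..1, ∫ v in (-1 : ℝ)..1, (1 + |v|) * u x v ^ 2 + (v * ud x v) ^ 2 := by
    refine intervalIntegral_le_integral_integral_of_le zero_le_one (by norm_num) ?_ hG
      fun v hv => abs_mul_sq_le_integral v (fun x hx => hud x hx v hv) ?_ ha
    · refine ContinuousOn.intervalIntegrable ?_
      rw [uIcc_of_le (by norm_num)]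
      exact continuous_abs.continuousOn.mul ((hu_cont.comp
        (continuous_const.prodMk continuous_id).continuousOn fun v hv => ⟨ha, hv⟩).pow 2)
    · exact hud_cont.comp (continuous_id.prodMk continuous_const).continuousOn
        fun x hx => ⟨hx, hv⟩
  exact ⟨trace_le 0 (left_mem_Icc.2 zero_le_one), trace_le 1 (right_mem_Icc.2 zero_le_one)⟩
end

section
/- (Uniqueness for the 1D RTE boundary value problem.) Let a < b, ε > 0, and σ : [a,b] → ℝ continuous with σ(x) > 0 for all x. Let u : [a,b] × [−1,1] → ℝ be continuous, continuously differentiable in x with jointly continuous x-derivative, satisfying v ∂ₓu(x,v) = (σ(x)/ε)(Lu)(x,v) for all (x,v), where (Lw)(x,v) = (1/2)∫_{−1}^{1} w(x,v′) dv′ − w(x,v), together with homogeneous inflow boundary conditions u(a,v) = 0 for v ∈ (0,1] and u(b,v) = 0 for v ∈ [−1,0). Then u ≡ 0 on [a,b] × [−1,1]. -/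
open Set intervalIntegral

/-!
Maximum principle. If `u` had a positive maximum `M` at `(x₀, v₀)`, the inflow conditions keep
`(x₀, v₀)` off the inflow boundary, so `v₀ ∂ₓu(x₀, v₀) ≥ 0` and the equation forces the velocity
average of `u(x₀, ·)` to be at least `M`; by continuity `u(x₀, ·) ≡ M`. Along the characteristic
`v = 1`, `w = M - u(·, 1) ≥ 0` satisfies `w' ≥ -C w` with `C` a bound for `σ / ε`, so `e^{Cx} w` is
nondecreasing; as `w(x₀) = 0`, also `w(a) ≤ 0`, contradicting `u(a, 1) = 0 < M`.
Applying this to `u` and `-u` gives `u = 0`.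
-/

theorem IsMaxOn.sub_mul_hasDerivWithinAt_nonpos {f : ℝ → ℝ} {s : Set ℝ} {f' x y : ℝ}
    (hmax : IsMaxOn f s x) (hs : Convex ℝ s) (hd : HasDerivWithinAt f f' s x)
    (hx : x ∈ s) (hy : y ∈ s) : (y - x) * f' ≤ 0 := by
  simpa using hmax.localize.hasFDerivWithinAt_nonpos hd.hasFDerivWithinAt
    (sub_mem_posTangentConeAt_of_segment_subset (hs.segment_subset hx hy))

theorem IsMaxOn.mul_hasDerivWithinAt_Icc_nonneg {f : ℝ → ℝ} {f' a b x v : ℝ}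
    (hmax : IsMaxOn f (Icc a b) x) (hd : HasDerivWithinAt f f' (Icc a b) x) (hx : x ∈ Icc a b)
    (hleft : 0 < v → a < x) (hright : v < 0 → x < b) : 0 ≤ v * f' := by
  have hab : a ≤ b := hx.1.trans hx.2
  have ha := hmax.sub_mul_hasDerivWithinAt_nonpos (convex_Icc a b) hd hx (left_mem_Icc.2 hab)
  have hb := hmax.sub_mul_hasDerivWithinAt_nonpos (convex_Icc a b) hd hx (right_mem_Icc.2 hab)
  rcases lt_trichotomy v 0 with hv | rfl | hv
  · nlinarith [hright hv]
  · simp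
  · nlinarith [hleft hv]

theorem integral_le_mul_of_le {g : ℝ → ℝ} {c d M : ℝ} (hcd : c ≤ d)
    (hg : IntervalIntegrable g MeasureTheory.volume c d) (hle : ∀ v ∈ Icc c d, g v ≤ M) :
    ∫ v in c..d, g v ≤ (d - c) * M := by
  simpa using integral_mono_on hcd hg intervalIntegrable_const hle

theorem eq_of_mul_le_integral {g : ℝ → ℝ} {c d M : ℝ} (hcd : c < d)
    (hg : ContinuousOn g (Icc c d)) (hle : ∀ v ∈ Icc c d, g v ≤ M)
    (hge : (d - c) * M ≤ ∫ v in c..d, g v) : ∀ v ∈ Icc c d, g v = M := by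
  by_contra! ⟨v, hv, hne⟩
  have := integral_lt_integral_of_continuousOn_of_le_of_exists_lt hcd hg continuousOn_const
    (fun w hw => hle w (Ioc_subset_Icc_self hw)) ⟨v, hv, (hle v hv).lt_of_ne hne⟩
  simp only [integral_const, smul_eq_mul] at this
  linarith

theorem monotoneOn_exp_mul_of_neg_mul_le_deriv {w w' : ℝ → ℝ} {C a b : ℝ}
    (hw : ContinuousOn w (Icc a b)) (hd : ∀ x ∈ Ioo a b, HasDerivAt w (w' x) x)
    (hw' : ∀ x ∈ Ioo a b, -(C * w x) ≤ w' x) :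
    MonotoneOn (fun x => Real.exp (C * x) * w x) (Icc a b) := by
  refine monotoneOn_of_hasDerivWithinAt_nonneg (convex_Icc a b)
    (f' := fun x => Real.exp (C * x) * C * w x + Real.exp (C * x) * w' x)
    ((Real.continuous_exp.comp (continuous_const_mul C)).continuousOn.mul hw) ?_ ?_
  · intro x hx
    rw [interior_Icc] at hx
    have hexp : HasDerivAt (fun x => Real.exp (C * x)) (Real.exp (C * x) * C) x := by
      simpa using ((hasDerivAt_id x).const_mul C).exp
    exact (hexp.mul (hd x hx)).hasDerivWithinAt
  · intro x hx
    rw [interior_Icc] at hx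
    have := hw' x hx
    have hexp := Real.exp_pos (C * x)
    nlinarith

theorem rte_eq_of_isMaxOn {a b ε : ℝ} {σ : ℝ → ℝ} {u ud : ℝ → ℝ → ℝ} {x₀ v₀ : ℝ}
    (hε : 0 < ε) (hσ : 0 < σ x₀) (hu : ContinuousOn (u x₀) (Icc (-1) 1))
    (hmax : IsMaxOn (fun q : ℝ × ℝ => u q.1 q.2) (Icc a b ×ˢ Icc (-1) 1) (x₀, v₀))
    (hx₀ : x₀ ∈ Icc a b) (hv₀ : v₀ ∈ Icc (-1 : ℝ) 1)
    (hud : HasDerivWithinAt (fun x => u x v₀) (ud x₀ v₀) (Icc a b) x₀)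
    (hpde : v₀ * ud x₀ v₀ = (σ x₀ / ε) * (((1 / 2) * ∫ v in (-1 : ℝ)..1, u x₀ v) - u x₀ v₀))
    (hleft : 0 < v₀ → a < x₀) (hright : v₀ < 0 → x₀ < b) :
    ∀ v ∈ Icc (-1 : ℝ) 1, u x₀ v = u x₀ v₀ := by
  have hmax_x : IsMaxOn (fun x => u x v₀) (Icc a b) x₀ := fun x hx => hmax (mk_mem_prod hx hv₀)
  have hflux : 0 ≤ v₀ * ud x₀ v₀ := hmax_x.mul_hasDerivWithinAt_Icc_nonneg hud hx₀ hleft hright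
  rw [hpde] at hflux
  have hgain := nonneg_of_mul_nonneg_right hflux (div_pos hσ hε)
  refine eq_of_mul_le_integral (by norm_num) hu (fun v hv => hmax (mk_mem_prod hx₀ hv)) ?_
  linarith

theorem rte_le_inflow_of_eq_max {a b ε M x₀ : ℝ} {σ : ℝ → ℝ} {u ud : ℝ → ℝ → ℝ}
    (hε : 0 ≤ ε) (hσ_cont : ContinuousOn σ (Icc a b)) (hσ_nonneg : ∀ x ∈ Icc a b, 0 ≤ σ x)
    (hint : ∀ x ∈ Icc a b, IntervalIntegrable (u x) MeasureTheory.volume (-1) 1)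
    (hud : ∀ x ∈ Icc a b, HasDerivWithinAt (fun x' => u x' 1) (ud x 1) (Icc a b) x)
    (hpde : ∀ x ∈ Icc a b, ud x 1 = (σ x / ε) * (((1 / 2) * ∫ v in (-1 : ℝ)..1, u x v) - u x 1))
    (hle : ∀ x ∈ Icc a b, ∀ v ∈ Icc (-1 : ℝ) 1, u x v ≤ M)
    (hx₀ : x₀ ∈ Icc a b) (hM : u x₀ 1 = M) : M ≤ u a 1 := by
  obtain ⟨C, hC⟩ := isCompact_Icc.exists_bound_of_continuousOn hσ_cont
  have hsub : Icc a x₀ ⊆ Icc a b := Icc_subset_Icc_right hx₀.2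
  have hw : ContinuousOn (fun x => M - u x 1) (Icc a x₀) :=
    continuousOn_const.sub fun x hx => ((hud x (hsub hx)).continuousWithinAt).mono hsub
  have hd : ∀ x ∈ Ioo a x₀, HasDerivAt (fun x => M - u x 1) (-ud x 1) x := fun x hx =>
    ((hud x (hsub (Ioo_subset_Icc_self hx))).hasDerivAt
      (Icc_mem_nhds hx.1 (hx.2.trans_le hx₀.2))).const_sub M
  have hw' : ∀ x ∈ Ioo a x₀, -(C / ε * (M - u x 1)) ≤ -ud x 1 := by
    intro x hx
    have hx' : x ∈ Icc a b := hsub (Ioo_subset_Icc_self hx)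
    have havg : (1 / 2) * (∫ v in (-1 : ℝ)..1, u x v) ≤ M := by
      have := integral_le_mul_of_le (by norm_num) (hint x hx') (hle x hx')
      linarith
    have hσC : σ x ≤ C := (le_abs_self _).trans (hC x hx')
    have hu1 : u x 1 ≤ M := hle x hx' 1 (right_mem_Icc.2 (by norm_num))
    rw [neg_le_neg_iff, hpde x hx']
    calc σ x / ε * (((1 / 2) * ∫ v in (-1 : ℝ)..1, u x v) - u x 1)
        ≤ σ x / ε * (M - u x 1) :=
          mul_le_mul_of_nonneg_left (by linarith) (div_nonneg (hσ_nonneg x hx') hε)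
      _ ≤ C / ε * (M - u x 1) :=
          mul_le_mul_of_nonneg_right (div_le_div_of_nonneg_right hσC hε) (by linarith)
  have := monotoneOn_exp_mul_of_neg_mul_le_deriv hw hd hw'
    (left_mem_Icc.2 hx₀.1) (right_mem_Icc.2 hx₀.1) hx₀.1
  simp only [hM, sub_self, mul_zero] at this
  nlinarith [Real.exp_pos (C / ε * a)]

theorem rte_nonpos_of_inflow_eq_zero {a b ε : ℝ} {σ : ℝ → ℝ} {u ud : ℝ → ℝ → ℝ} (hε : 0 < ε)
    (hσ_cont : ContinuousOn σ (Icc a b)) (hσ_pos : ∀ x ∈ Icc a b, 0 < σ x)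
    (hu_cont : ContinuousOn (fun q : ℝ × ℝ => u q.1 q.2) (Icc a b ×ˢ Icc (-1 : ℝ) 1))
    (hud : ∀ x ∈ Icc a b, ∀ v ∈ Icc (-1 : ℝ) 1,
      HasDerivWithinAt (fun x' => u x' v) (ud x v) (Icc a b) x)
    (hpde : ∀ x ∈ Icc a b, ∀ v ∈ Icc (-1 : ℝ) 1,
      v * ud x v = (σ x / ε) * (((1 / 2) * ∫ v' in (-1 : ℝ)..1, u x v') - u x v))
    (hin_a : ∀ v ∈ Ioc (0 : ℝ) 1, u a v = 0) (hin_b : ∀ v ∈ Ico (-1 : ℝ) 0, u b v = 0) :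
    ∀ x ∈ Icc a b, ∀ v ∈ Icc (-1 : ℝ) 1, u x v ≤ 0 := by
  by_contra! ⟨xp, hxp, vp, hvp, hpos⟩
  obtain ⟨⟨x₀, v₀⟩, ⟨hx₀, hv₀⟩, hmax⟩ := (isCompact_Icc.prod isCompact_Icc).exists_isMaxOn
    ⟨(xp, vp), hxp, hvp⟩ hu_cont
  have hM : 0 < u x₀ v₀ := hpos.trans_le (hmax (mk_mem_prod hxp hvp))
  have hleft : 0 < v₀ → a < x₀ := fun hv =>
    hx₀.1.lt_of_ne (by rintro rfl; linarith [hin_a v₀ ⟨hv, hv₀.2⟩])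
  have hright : v₀ < 0 → x₀ < b := fun hv =>
    hx₀.2.lt_of_ne (by rintro rfl; linarith [hin_b v₀ ⟨hv₀.1, hv⟩])
  have hslice : ∀ x ∈ Icc a b, ContinuousOn (u x) (Icc (-1) 1) := fun x hx =>
    hu_cont.comp (Continuous.prodMk_right x).continuousOn fun v hv => ⟨hx, hv⟩
  have hone : (1 : ℝ) ∈ Icc (-1) 1 := right_mem_Icc.2 (by norm_num)
  have hconst := rte_eq_of_isMaxOn hε (hσ_pos x₀ hx₀) (hslice x₀ hx₀) hmax hx₀ hv₀
    (hud x₀ hx₀ v₀ hv₀) (hpde x₀ hx₀ v₀ hv₀) hleft hright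
  have := rte_le_inflow_of_eq_max hε.le hσ_cont (fun x hx => (hσ_pos x hx).le)
    (fun x hx => (hslice x hx).intervalIntegrable_of_Icc (by norm_num))
    (fun x hx => hud x hx 1 hone) (fun x hx => by simpa using hpde x hx 1 hone)
    (fun x hx v hv => hmax (mk_mem_prod hx hv)) hx₀ (hconst 1 hone)
  linarith [hin_a 1 ⟨one_pos, le_rfl⟩]

theorem rte_uniqueness_general (a b ε : ℝ) (hε : 0 < ε)
    (σ : ℝ → ℝ) (hσ_cont : ContinuousOn σ (Set.Icc a b))
    (hσ_pos : ∀ x ∈ Set.Icc a b, 0 < σ x)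
    (u ud : ℝ → ℝ → ℝ)
    (hu_cont : ContinuousOn (fun q : ℝ × ℝ => u q.1 q.2)
      (Set.Icc a b ×ˢ Set.Icc (-1 : ℝ) 1))
    (hud : ∀ x ∈ Set.Icc a b, ∀ v ∈ Set.Icc (-1 : ℝ) 1,
      HasDerivWithinAt (fun x' => u x' v) (ud x v) (Set.Icc a b) x)
    (hpde : ∀ x ∈ Set.Icc a b, ∀ v ∈ Set.Icc (-1 : ℝ) 1,
      v * ud x v = (σ x / ε) * (((1 / 2) * ∫ v' in (-1 : ℝ)..1, u x v') - u x v))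
    (hin_a : ∀ v ∈ Set.Ioc (0 : ℝ) 1, u a v = 0)
    (hin_b : ∀ v ∈ Set.Ico (-1 : ℝ) 0, u b v = 0) :
    ∀ x ∈ Set.Icc a b, ∀ v ∈ Set.Icc (-1 : ℝ) 1, u x v = 0 := by
  intro x hx v hv
  have hpde_neg : ∀ x ∈ Icc a b, ∀ v ∈ Icc (-1 : ℝ) 1, v * -ud x v =
      (σ x / ε) * (((1 / 2) * ∫ v' in (-1 : ℝ)..1, -u x v') - -u x v) := by
    intro x hx v hv
    rw [integral_neg, mul_neg, hpde x hx v hv]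
    ring
  have hle := rte_nonpos_of_inflow_eq_zero hε hσ_cont hσ_pos hu_cont hud hpde hin_a hin_b x hx v hv
  have hge := rte_nonpos_of_inflow_eq_zero (u := fun x v => -u x v) hε hσ_cont hσ_pos hu_cont.neg
    (fun x hx v hv => (hud x hx v hv).neg) hpde_neg (by simpa using hin_a) (by simpa using hin_b)
    x hx v hv
  linarith

/-- Uniqueness for the 1D RTE boundary value problem: if `u` solves
`v ∂ₓu = (σ(x)/ε) L u` on `[a,b] × [−1,1]` with `σ > 0` and homogeneous inflow boundary
conditions (`u(a,v) = 0` for `v ∈ (0,1]`, `u(b,v) = 0` for `v ∈ [−1,0)`), then `u ≡ 0`. -/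
theorem rte_uniqueness (a b ε : ℝ) (hab : a < b) (hε : 0 < ε)
    (σ : ℝ → ℝ) (hσ_cont : ContinuousOn σ (Set.Icc a b))
    (hσ_pos : ∀ x ∈ Set.Icc a b, 0 < σ x)
    (u ud : ℝ → ℝ → ℝ)
    (hu_cont : ContinuousOn (fun q : ℝ × ℝ => u q.1 q.2)
      (Set.Icc a b ×ˢ Set.Icc (-1 : ℝ) 1))
    (hud : ∀ x ∈ Set.Icc a b, ∀ v ∈ Set.Icc (-1 : ℝ) 1,
      HasDerivWithinAt (fun x' => u x' v) (ud x v) (Set.Icc a b) x)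
    (hud_cont : ContinuousOn (fun q : ℝ × ℝ => ud q.1 q.2)
      (Set.Icc a b ×ˢ Set.Icc (-1 : ℝ) 1))
    (hpde : ∀ x ∈ Set.Icc a b, ∀ v ∈ Set.Icc (-1 : ℝ) 1,
      v * ud x v = (σ x / ε) * (((1 / 2) * ∫ v' in (-1 : ℝ)..1, u x v') - u x v))
    (hin_a : ∀ v ∈ Set.Ioc (0 : ℝ) 1, u a v = 0)
    (hin_b : ∀ v ∈ Set.Ico (-1 : ℝ) 0, u b v = 0) :
    ∀ x ∈ Set.Icc a b, ∀ v ∈ Set.Icc (-1 : ℝ) 1, u x v = 0 :=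
  rte_uniqueness_general a b ε hε σ hσ_cont hσ_pos u ud hu_cont hud hpde hin_a hin_b
end
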